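/- arXiv:2002.10539 — 5 statements merged into one kernel-verified Lean document; each statement's English description precedes it below -/
import Mathlib

section
/- Let S be a finite nonempty state space, A a finite nonempty action space, P : S → A → PMF S a transition kernel, R : S → A → S → ℝ a reward function, and π̃ : S → A a (stationary, deterministic, hence sequentially consistent) base policy. Define the base-policy value function V : ℕ → S → ℝ by V 0 s = 0 and V (t+1) s = E_{s' ~ P(s, π̃ s)}[R(s, π̃ s, s') + V t s'], the Q-function Q t s a = E_{s' ~ P(s,a)}[R(s, a, s') + V t s'], and the rollout value function W : ℕ → S → ℝ by W 0 s = 0 and W (t+1) s = E_{s' ~ P(s, a_t(s))}[R(s, a_t(s), s') + W t s'], where a_t(s) is any element of argmax_{a ∈ A} Q t s a. Then for every horizon h and every state s, W h s ≥ V h s; i.e., the rollout policy does at least as well as its base policy in expectation. -/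
open scoped BigOperators

/-- **Rollout does at least as well as its base policy.**
For a finite MDP with transition kernel `P`, reward `R` and a stationary
deterministic (hence sequentially consistent) base policy `πb` with value
function `V`, the rollout value function `W` (obtained by acting greedily with
respect to the one-step lookahead value `Q` of the base policy) satisfies
`W h s ≥ V h s` for every horizon `h` and state `s`. -/
theorem rollout_policy_dominates_base_policy
    {S A : Type*} [Fintype S] [Fintype A] [Nonempty S] [Nonempty A]
    (P : S → A → PMF S) (R : S → A → S → ℝ) (πb : S → A)
    (V W : ℕ → S → ℝ) (Q : ℕ → S → A → ℝ) (a : ℕ → S → A)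
    (hV0 : ∀ s : S, V 0 s = 0)
    (hV : ∀ (t : ℕ) (s : S),
      V (t + 1) s = ∑ s' : S, (P s (πb s) s').toReal * (R s (πb s) s' + V t s'))
    (hQ : ∀ (t : ℕ) (s : S) (b : A),
      Q t s b = ∑ s' : S, (P s b s').toReal * (R s b s' + V t s'))
    (ha : ∀ (t : ℕ) (s : S) (b : A), Q t s b ≤ Q t s (a t s))
    (hW0 : ∀ s : S, W 0 s = 0)
    (hW : ∀ (t : ℕ) (s : S),
      W (t + 1) s = ∑ s' : S, (P s (a t s) s').toReal * (R s (a t s) s' + W t s')) :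
    ∀ (h : ℕ) (s : S), W h s ≥ V h s := by
  intro h
  induction h with
  | zero => intro s; rw [hV0, hW0]
  | succ t ih =>
    intro s
    have h1 : Q t s (a t s) ≤ W (t + 1) s := by
      rw [hW, hQ]
      apply Finset.sum_le_sum
      intro s' _
      have := ih s'
      have hnn : (0:ℝ) ≤ (P s (a t s) s').toReal := ENNReal.toReal_nonneg
      nlinarith
    have h2 : V (t + 1) s = Q t s (πb s) := by rw [hV, hQ]
    calc V (t+1) s = Q t s (πb s) := h2
      _ ≤ Q t s (a t s) := ha t s (πb s)
      _ ≤ W (t+1) s := h1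
end

section
/- Let S be a finite nonempty state space, A a finite nonempty action space, P : S → A → PMF S a transition kernel, and R : S → A → S → ℝ a reward function. Define the optimal h-horizon value V* h s as the supremum, over all nonstationary deterministic Markov policies π = (π_0, …, π_{h-1}) with π_t : S → A, of the expected total reward E[∑_{t=0}^{h-1} R(s_t, π_t(s_t), s_{t+1})] starting from s_0 = s, where s_{t+1} ~ P(s_t, π_t(s_t)). Then V* satisfies the Bellman recursion: V* 0 s = 0, and V* (h+1) s = max_{a ∈ A} E_{s' ~ P(s,a)}[R(s, a, s') + V* h s'] for all s ∈ S. -/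
open scoped BigOperators

/-- **Bellman recursion for the optimal finite-horizon value.**
`J h π s` is the expected total `h`-step reward of the nonstationary
deterministic Markov policy `π : ℕ → S → A` started from `s` (only the first
`h` decision rules matter), and `Vstar h s = ⨆ π, J h π s` is the optimal
`h`-horizon value.  Then `Vstar 0 s = 0` and
`Vstar (h+1) s = max_{a ∈ A} E_{s' ~ P(s,a)}[R(s,a,s') + Vstar h s']`. -/
theorem optimal_value_bellman_recursion
    {S A : Type*} [Fintype S] [Fintype A] [Nonempty S] [Nonempty A]
    (P : S → A → PMF S) (R : S → A → S → ℝ)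
    (J : ℕ → (ℕ → S → A) → S → ℝ)
    (hJ0 : ∀ (π : ℕ → S → A) (s : S), J 0 π s = 0)
    (hJ : ∀ (h : ℕ) (π : ℕ → S → A) (s : S),
      J (h + 1) π s = ∑ s' : S, (P s (π 0 s) s').toReal
        * (R s (π 0 s) s' + J h (fun t => π (t + 1)) s'))
    (Vstar : ℕ → S → ℝ)
    (hVstar : ∀ (h : ℕ) (s : S), Vstar h s = ⨆ π : ℕ → S → A, J h π s) :
    (∀ s : S, Vstar 0 s = 0) ∧
    (∀ (h : ℕ) (s : S),
      Vstar (h + 1) s = Finset.univ.sup' Finset.univ_nonempty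
        (fun a : A => ∑ s' : S, (P s a s').toReal * (R s a s' + Vstar h s'))) := by
  -- J depends only on the first h decision rules
  have prefixJ : ∀ (h : ℕ) (π π' : ℕ → S → A), (∀ t, t < h → π t = π' t) →
      ∀ s, J h π s = J h π' s := by
    intro h
    induction h with
    | zero => intro π π' _ s; rw [hJ0, hJ0]
    | succ n ih =>
      intro π π' hpp s
      rw [hJ, hJ, hpp 0 (Nat.succ_pos n)]
      refine Finset.sum_congr rfl (fun s' _ => ?_)
      rw [ih (fun t => π (t + 1)) (fun t => π' (t + 1))
        (fun t ht => hpp (t + 1) (by omega)) s']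
  have bdd : ∀ (h : ℕ) (s : S), BddAbove (Set.range fun π : ℕ → S → A => J h π s) := by
    intro h s
    have hfin : (Set.range fun π : ℕ → S → A => J h π s).Finite := by
      have hsub : (Set.range fun π : ℕ → S → A => J h π s) ⊆
          (fun f : Fin h → S → A =>
            J h (fun t => if ht : t < h then f ⟨t, ht⟩ else Classical.arbitrary _) s) ''
            Set.univ := by
        rintro x ⟨π, rfl⟩
        refine ⟨fun t => π t.1, Set.mem_univ _, ?_⟩
        apply prefixJ
        intro t ht
        simp [ht]
      exact Set.Finite.subset (Set.Finite.image _ Set.finite_univ) hsub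
    exact hfin.bddAbove
  have hle : ∀ (π : ℕ → S → A) (h : ℕ) (s : S), J h π s ≤ Vstar h s := by
    intro π h s
    rw [hVstar]
    exact le_ciSup (bdd h s) π
  have hV0 : ∀ s : S, Vstar 0 s = 0 := by
    intro s
    rw [hVstar]
    have : (fun π : ℕ → S → A => J 0 π s) = fun _ => (0 : ℝ) := by
      funext π; exact hJ0 π s
    rw [this, ciSup_const]
  -- The "≤" half of the Bellman equation
  have key_le : ∀ (h : ℕ) (s : S),
      Vstar (h + 1) s ≤ Finset.univ.sup' Finset.univ_nonempty
        (fun a : A => ∑ s' : S, (P s a s').toReal * (R s a s' + Vstar h s')) := by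
    intro h s
    rw [hVstar]
    apply ciSup_le
    intro π
    rw [hJ]
    refine le_trans ?_ (Finset.le_sup' _ (Finset.mem_univ (π 0 s)))
    refine Finset.sum_le_sum (fun s' _ => ?_)
    have h1 := hle (fun t => π (t + 1)) h s'
    have hp : (0 : ℝ) ≤ (P s (π 0 s) s').toReal := ENNReal.toReal_nonneg
    exact mul_le_mul_of_nonneg_left (by linarith) hp
  -- Simultaneously optimal policies exist
  have opt : ∀ h : ℕ, ∃ π : ℕ → S → A, ∀ s, J h π s = Vstar h s := by
    intro h
    induction h with
    | zero =>
      exact ⟨fun _ _ => Classical.arbitrary A, fun s => by rw [hJ0, hV0]⟩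
    | succ n ih =>
      obtain ⟨πs, hπs⟩ := ih
      choose a ha using fun s : S =>
        Finset.exists_mem_eq_sup' (Finset.univ_nonempty (α := A))
          (fun a : A => ∑ s' : S, (P s a s').toReal * (R s a s' + Vstar n s'))
      refine ⟨fun t => if t = 0 then a else πs (t - 1), fun s => ?_⟩
      have hJval : J (n + 1) (fun t => if t = 0 then a else πs (t - 1)) s
          = ∑ s' : S, (P s (a s) s').toReal * (R s (a s) s' + Vstar n s') := by
        rw [hJ]
        simp only [if_pos rfl]
        refine Finset.sum_congr rfl (fun s' _ => ?_)
        have hsh : (fun t => (fun t => if t = 0 then a else πs (t - 1)) (t + 1)) = πs := by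
          funext t; simp
        rw [hsh, hπs s']
        simp
      have h1 : J (n + 1) (fun t => if t = 0 then a else πs (t - 1)) s
          = Finset.univ.sup' Finset.univ_nonempty
            (fun a : A => ∑ s' : S, (P s a s').toReal * (R s a s' + Vstar n s')) :=
        hJval.trans (ha s).2.symm
      refine le_antisymm (hle _ (n + 1) s) ?_
      rw [h1]
      exact key_le n s
  refine ⟨hV0, fun h s => ?_⟩
  obtain ⟨πs, hπs⟩ := opt h
  choose a ha using fun s : S =>
    Finset.exists_mem_eq_sup' (Finset.univ_nonempty (α := A))
      (fun a : A => ∑ s' : S, (P s a s').toReal * (R s a s' + Vstar h s'))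
  have hJval : J (h + 1) (fun t => if t = 0 then a else πs (t - 1)) s
      = ∑ s' : S, (P s (a s) s').toReal * (R s (a s) s' + Vstar h s') := by
    rw [hJ]
    simp only [if_pos rfl]
    refine Finset.sum_congr rfl (fun s' _ => ?_)
    have hsh : (fun t => (fun t => if t = 0 then a else πs (t - 1)) (t + 1)) = πs := by
      funext t; simp
    rw [hsh, hπs s']
    simp
  refine le_antisymm (key_le h s) ?_
  have := hle (fun t => if t = 0 then a else πs (t - 1)) (h + 1) s
  rw [hJval, ← (ha s).2] at this
  exact this
end

section
/- Let S be a finite nonempty state space, A a finite nonempty action space, P : S → A → PMF S a transition kernel, and R : S → A → S → ℝ a reward function. For every horizon h there exists a nonstationary deterministic Markov policy π* = (π*_0, …, π*_{h-1}) whose expected total reward from every start state s equals the optimal h-horizon value V* h s, i.e., the supremum over all nonstationary deterministic Markov policies of the expected total reward is attained. -/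
open scoped BigOperators

/-- **Existence of an optimal nonstationary deterministic Markov policy.**
`J h π s` is the expected total `h`-step reward of the policy `π : ℕ → S → A`
started from `s` (only the first `h` decision rules matter).  For every horizon
`h` there is a policy attaining the optimal value `⨆ π, J h π s` from every
start state simultaneously. -/
theorem exists_optimal_markov_policy
    {S A : Type*} [Fintype S] [Fintype A] [Nonempty S] [Nonempty A]
    (P : S → A → PMF S) (R : S → A → S → ℝ)
    (J : ℕ → (ℕ → S → A) → S → ℝ)
    (hJ0 : ∀ (π : ℕ → S → A) (s : S), J 0 π s = 0)
    (hJ : ∀ (h : ℕ) (π : ℕ → S → A) (s : S),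
      J (h + 1) π s = ∑ s' : S, (P s (π 0 s) s').toReal
        * (R s (π 0 s) s' + J h (fun t => π (t + 1)) s')) :
    ∀ h : ℕ, ∃ πopt : ℕ → S → A, ∀ s : S,
      J h πopt s = ⨆ π : ℕ → S → A, J h π s := by
  have key : ∀ h : ℕ, ∃ πopt : ℕ → S → A,
      ∀ (s : S) (π : ℕ → S → A), J h π s ≤ J h πopt s := by
    intro h
    induction h with
    | zero =>
      exact ⟨fun _ _ => Classical.arbitrary A, fun s π => by simp [hJ0]⟩
    | succ h ih =>
      obtain ⟨π0, hπ0⟩ := ih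
      set f : S → A → ℝ :=
        fun s a => ∑ s' : S, (P s a s').toReal * (R s a s' + J h π0 s') with hf
      have hg : ∀ s : S, ∃ a : A, ∀ b : A, f s b ≤ f s a := by
        intro s
        obtain ⟨a, -, ha⟩ := Finset.exists_max_image Finset.univ (f s)
          ⟨Classical.arbitrary A, Finset.mem_univ _⟩
        exact ⟨a, fun b => ha b (Finset.mem_univ b)⟩
      choose g hgmax using hg
      refine ⟨fun t => Nat.rec g (fun t _ => π0 t) t, fun s π => ?_⟩
      rw [hJ h, hJ h]
      calc ∑ s' : S, (P s (π 0 s) s').toReal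
            * (R s (π 0 s) s' + J h (fun t => π (t + 1)) s')
          ≤ ∑ s' : S, (P s (π 0 s) s').toReal * (R s (π 0 s) s' + J h π0 s') := by
            apply Finset.sum_le_sum
            intro s' _
            exact mul_le_mul_of_nonneg_left
              (by linarith [hπ0 s' (fun t => π (t + 1))]) ENNReal.toReal_nonneg
        _ ≤ f s (g s) := hgmax s (π 0 s)
        _ = _ := by simp [hf]
  intro h
  obtain ⟨πopt, hopt⟩ := key h
  refine ⟨πopt, fun s => le_antisymm ?_ ?_⟩
  · exact le_ciSup ⟨J h πopt s, by rintro x ⟨π, rfl⟩; exact hopt s π⟩ πopt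
  · exact ciSup_le fun π => hopt s π
end

section
/- Let Y be a real random variable distributed as the Gaussian N(μ, σ²) with σ > 0, and let y* ∈ ℝ. Then the expected improvement E[(y* − Y)⁺] = (y* − μ)·Φ((y* − μ)/σ) + σ·φ((y* − μ)/σ), where φ(t) = exp(−t²/2)/√(2π) is the standard normal density and Φ(t) = ∫_{−∞}^t φ(u) du is the standard normal cumulative distribution function, and (a)⁺ = max(a, 0). -/
open MeasureTheory ProbabilityTheory

/-- The standard normal density `φ(t) = exp(−t²/2)/√(2π)`. -/
noncomputable def stdNormalPDF (t : ℝ) : ℝ :=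
  Real.exp (-t ^ 2 / 2) / Real.sqrt (2 * Real.pi)

/-- The standard normal cumulative distribution function
`Φ(t) = ∫_{−∞}^t φ(u) du`. -/
noncomputable def stdNormalCDF (t : ℝ) : ℝ :=
  ∫ u in Set.Iic t, stdNormalPDF u

/-!
An affine change of variables `Y = σ Z + μ` reduces the claim to a standard normal `Z` and
`t = (y* − μ)/σ`, where `E[(t − Z)⁺] = t Φ(t) − ∫_{−∞}^t z φ(z) dz`. Since `φ' = −z φ` and
`φ → 0` at `−∞`, the last integral is `−φ(t)`.
-/

open Filter Topology Set

lemma stdNormalPDF_eq_gaussianPDFReal : stdNormalPDF = gaussianPDFReal 0 1 := by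
  ext x
  simp [stdNormalPDF, gaussianPDFReal, div_eq_inv_mul]

lemma integrable_stdNormalPDF : Integrable stdNormalPDF :=
  stdNormalPDF_eq_gaussianPDFReal ▸ integrable_gaussianPDFReal 0 1

lemma integrable_id_mul_stdNormalPDF : Integrable fun x ↦ x * stdNormalPDF x := by
  have h := (integrable_mul_exp_neg_mul_sq (one_half_pos (α := ℝ))).div_const √(2 * Real.pi)
  refine h.congr (ae_of_all _ fun x ↦ ?_)
  simp only [stdNormalPDF]
  ring_nf

lemma hasDerivAt_stdNormalPDF (x : ℝ) :
    HasDerivAt stdNormalPDF (-x * stdNormalPDF x) x := by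
  have h := (((hasDerivAt_pow 2 x).fun_neg.div_const 2).exp).div_const √(2 * Real.pi)
  exact h.congr_deriv (by simp only [stdNormalPDF]; ring)

lemma tendsto_stdNormalPDF_atBot : Tendsto stdNormalPDF atBot (𝓝 0) := by
  have h := ((tendsto_rpow_abs_mul_exp_neg_mul_sq_cocompact one_half_pos 0).mono_left
    atBot_le_cocompact).div_const √(2 * Real.pi)
  rw [zero_div] at h
  refine h.congr fun x ↦ ?_
  simp only [Real.rpow_zero, one_mul, stdNormalPDF]
  ring_nf

lemma integral_Iic_id_mul_stdNormalPDF (t : ℝ) :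
    ∫ x in Iic t, x * stdNormalPDF x = -stdNormalPDF t := by
  have h := integral_Iic_of_hasDerivAt_of_tendsto' (a := t) (f := fun x ↦ -stdNormalPDF x)
    (fun x _ ↦ by simpa using (hasDerivAt_stdNormalPDF x).fun_neg)
    integrable_id_mul_stdNormalPDF.integrableOn (by simpa using tendsto_stdNormalPDF_atBot.neg)
  simpa using h

lemma integral_gaussianReal_zero_one_eq_integral_stdNormalPDF_smul {E : Type*}
    [NormedAddCommGroup E] [NormedSpace ℝ E] (f : ℝ → E) :
    ∫ x, f x ∂gaussianReal 0 1 = ∫ x, stdNormalPDF x • f x := by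
  rw [integral_gaussianReal_eq_integral_smul one_ne_zero, stdNormalPDF_eq_gaussianPDFReal]

lemma integral_max_sub_zero_gaussianReal_zero_one (t : ℝ) :
    ∫ z, max (t - z) 0 ∂gaussianReal 0 1 = t * stdNormalCDF t + stdNormalPDF t := by
  have h_indicator : (fun z ↦ stdNormalPDF z • max (t - z) 0) =
      (Iic t).indicator fun z ↦ t * stdNormalPDF z - z * stdNormalPDF z := by
    ext z
    by_cases hz : z ≤ t
    · simp [hz]
      ring
    · simp [hz, (not_le.1 hz).le]
  rw [integral_gaussianReal_zero_one_eq_integral_stdNormalPDF_smul, h_indicator,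
    integral_indicator measurableSet_Iic,
    integral_sub (integrable_stdNormalPDF.const_mul t).integrableOn
      integrable_id_mul_stdNormalPDF.integrableOn,
    integral_const_mul, integral_Iic_id_mul_stdNormalPDF, stdNormalCDF, sub_neg_eq_add]

lemma gaussianReal_eq_map_mul_add (μ σ : ℝ) :
    gaussianReal μ (σ ^ 2).toNNReal = (gaussianReal 0 1).map fun z ↦ σ * z + μ := by
  rw [show (fun z ↦ σ * z + μ) = (· + μ) ∘ (σ * ·) from rfl,
    ← Measure.map_map (measurable_add_const μ) (measurable_const_mul σ),
    gaussianReal_map_const_mul, gaussianReal_map_add_const]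
  congr 1
  · ring
  · ext; simp [sq_nonneg]

/-- **Closed form of expected improvement.** If `Y ~ N(μ, σ²)` with `σ > 0`
and `y* ∈ ℝ`, then
`E[(y* − Y)⁺] = (y* − μ)·Φ((y* − μ)/σ) + σ·φ((y* − μ)/σ)`. -/
theorem expected_improvement_closed_form
    (μ σ ystar : ℝ) (hσ : 0 < σ) :
    ∫ y, max (ystar - y) 0 ∂(gaussianReal μ (σ ^ 2).toNNReal) =
      (ystar - μ) * stdNormalCDF ((ystar - μ) / σ)
        + σ * stdNormalPDF ((ystar - μ) / σ) := by
  set t := (ystar - μ) / σ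
  have h_scale (z : ℝ) : max (ystar - (σ * z + μ)) 0 = σ * max (t - z) 0 := by
    rw [mul_max_of_nonneg _ _ hσ.le, mul_zero, mul_sub, mul_div_cancel₀ _ hσ.ne']
    ring_nf
  rw [gaussianReal_eq_map_mul_add, integral_map (by fun_prop) (by fun_prop)]
  simp_rw [h_scale]
  rw [integral_const_mul, integral_max_sub_zero_gaussianReal_zero_one, mul_add, ← mul_assoc,
    mul_div_cancel₀ _ hσ.ne']
end

section
/- (One-dimensional Koksma–Hlawka inequality.) Let f : [0, 1] → ℝ have bounded total variation V(f) on [0, 1], and let x₁, …, x_N ∈ [0, 1]. Define the star discrepancy D*_N = sup_{t ∈ [0, 1]} | (1/N)·#{i : x_i ≤ t} − t |. Then the quasi–Monte Carlo integration error satisfies | (1/N) ∑_{i=1}^N f(x_i) − ∫₀¹ f(u) du | ≤ V(f) · D*_N. -/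
/-!
Sort the points, `y₀ ≤ ⋯ ≤ y_{N-1}`. A bound `D` on the star discrepancy says exactly that every
`y_k` lies within `D` of every point of the cell `[k/N, (k+1)/N]`: at `t = y_k` at least `k + 1`
points are `≤ t`, and just below `y_k` at most `k` are. For `g` monotone (and extended by constants
outside `[0, 1]`), comparing `g (y_k)` with `g` on its cell gives
`(1/N) ∑ g (y_k) - ∫₀¹ g = ∑_k ∫_{cell k} (g (y_k) - g u) du ≤ ∫₀¹ (g (u + D) - g u) du`,
and the last integral telescopes to `∫₁^{1+D} g - ∫₀^D g ≤ D (g 1 - g 0)`; the lower bound is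
symmetric. A function of bounded variation is `p - q` with `p = (v + f)/2`, `q = (v - f)/2`
monotone, `v` its variation function, so that the increments of `p` and `q` add up to `V(f)`.
-/

open MeasureTheory Set
open scoped Finset

theorem Monotone.integral_comp_add_sub_le {G : ℝ → ℝ} (hG : Monotone G) {D : ℝ} (hD : 0 ≤ D)
    (a b : ℝ) : ∫ u in a..b, (G (u + D) - G u) ≤ D * (G (b + D) - G a) := by
  have hint : ∀ c d, IntervalIntegrable G volume c d := fun c d => hG.intervalIntegrable
  have hshift : ∫ u in a..b, (G (u + D) - G u) =
      (∫ u in b..b + D, G u) - ∫ u in a..a + D, G u := by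
    have hG' : Monotone fun u => G (u + D) := fun u v huv => hG (by linarith)
    rw [intervalIntegral.integral_sub hG'.intervalIntegrable (hint a b),
      intervalIntegral.integral_comp_add_right,
      intervalIntegral.integral_interval_sub_interval_comm' (hint _ _) (hint _ _) (hint _ _)]
  have hhigh : ∫ u in b..b + D, G u ≤ D * G (b + D) := by
    simpa using intervalIntegral.integral_mono_on (a := b) (b := b + D) (by linarith) (hint _ _)
      intervalIntegrable_const fun u hu => hG hu.2
  have hlow : D * G a ≤ ∫ u in a..a + D, G u := by
    simpa using intervalIntegral.integral_mono_on (a := a) (b := a + D) (by linarith)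
      intervalIntegrable_const (hint _ _) fun u hu => hG hu.1
  linarith

theorem Monotone.integral_sub_comp_sub_le {G : ℝ → ℝ} (hG : Monotone G) {D : ℝ} (hD : 0 ≤ D)
    (a b : ℝ) : ∫ u in a..b, (G u - G (u - D)) ≤ D * (G b - G (a - D)) := by
  have h := hG.integral_comp_add_sub_le hD (a - D) (b - D)
  rw [sub_add_cancel, ← intervalIntegral.integral_comp_sub_right] at h
  simpa only [sub_add_cancel] using h

theorem sum_integral_cells {N : ℕ} (hN : 0 < N) {h : ℝ → ℝ}
    (hh : IntervalIntegrable h volume 0 1) :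
    ∑ k : Fin N, ∫ u in (k : ℕ) / N..((k : ℕ) + 1) / N, h u = ∫ u in (0 : ℝ)..1, h u := by
  have hmem : ∀ j ≤ N, ((j : ℕ) / N : ℝ) ∈ uIcc (0 : ℝ) 1 := fun j hj => by
    rw [uIcc_of_le zero_le_one]
    exact ⟨by positivity, div_le_one_of_le₀ (by exact_mod_cast hj) (Nat.cast_nonneg N)⟩
  have hcell : ∀ k < N, IntervalIntegrable h volume ((k : ℕ) / N : ℝ) ((k + 1 : ℕ) / N) :=
    fun k hk => hh.mono_set (uIcc_subset_uIcc (hmem k hk.le) (hmem (k + 1) hk))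
  rw [Fin.sum_univ_eq_sum_range (fun k => ∫ u in (k : ℝ) / N..((k : ℝ) + 1) / N, h u)]
  simpa [hN.ne'] using intervalIntegral.sum_integral_adjacent_intervals hcell

def CellwiseWithin {N : ℕ} (y : Fin N → ℝ) (D : ℝ) : Prop :=
  ∀ k : Fin N, ∀ u ∈ Icc ((k : ℕ) / N : ℝ) (((k : ℕ) + 1) / N), |y k - u| ≤ D

theorem CellwiseWithin.nonneg {N : ℕ} (hN : 0 < N) {y : Fin N → ℝ} {D : ℝ}
    (hy : CellwiseWithin y D) : 0 ≤ D :=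
  (abs_nonneg _).trans (hy ⟨0, hN⟩ 0 ⟨by simp, by positivity⟩)

theorem Monotone.abs_average_sub_integral_le {N : ℕ} (hN : 0 < N) {G : ℝ → ℝ}
    (hG : Monotone G) {y : Fin N → ℝ} {D : ℝ} (hy : CellwiseWithin y D) :
    |(1 / N : ℝ) * ∑ k, G (y k) - ∫ u in (0 : ℝ)..1, G u| ≤ D * (G (1 + D) - G (-D)) := by
  have hD := hy.nonneg hN
  have hG_add : Monotone fun u => G (u + D) := fun u v huv => hG (by linarith)
  have hG_sub : Monotone fun u => G (u - D) := fun u v huv => hG (by linarith)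
  have hcell_le : ∀ k : Fin N, ((k : ℕ) / N : ℝ) ≤ ((k : ℕ) + 1) / N := fun k => by
    gcongr; linarith
  have herr : (1 / N : ℝ) * ∑ k, G (y k) - ∫ u in (0 : ℝ)..1, G u =
      ∑ k : Fin N, ∫ u in (k : ℕ) / N..((k : ℕ) + 1) / N, (G (y k) - G u) := by
    rw [← sum_integral_cells hN hG.intervalIntegrable, Finset.mul_sum, ← Finset.sum_sub_distrib]
    refine Finset.sum_congr rfl fun k _ => ?_
    rw [intervalIntegral.integral_sub intervalIntegrable_const hG.intervalIntegrable,
      intervalIntegral.integral_const, smul_eq_mul]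
    ring
  have hupper : ∑ k : Fin N, ∫ u in (k : ℕ) / N..((k : ℕ) + 1) / N, (G (y k) - G u) ≤
      ∫ u in (0 : ℝ)..1, (G (u + D) - G u) := by
    rw [← sum_integral_cells hN (hG_add.intervalIntegrable.sub hG.intervalIntegrable)]
    refine Finset.sum_le_sum fun k _ => intervalIntegral.integral_mono_on (hcell_le k)
      (intervalIntegrable_const.sub hG.intervalIntegrable)
      (hG_add.intervalIntegrable.sub hG.intervalIntegrable) fun u hu => ?_
    have := (abs_le.1 (hy k u hu)).2
    exact sub_le_sub_right (hG (by linarith)) _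
  have hlower : ∑ k : Fin N, ∫ u in (k : ℕ) / N..((k : ℕ) + 1) / N, (G u - G (y k)) ≤
      ∫ u in (0 : ℝ)..1, (G u - G (u - D)) := by
    rw [← sum_integral_cells hN (hG.intervalIntegrable.sub hG_sub.intervalIntegrable)]
    refine Finset.sum_le_sum fun k _ => intervalIntegral.integral_mono_on (hcell_le k)
      (hG.intervalIntegrable.sub intervalIntegrable_const)
      (hG.intervalIntegrable.sub hG_sub.intervalIntegrable) fun u hu => ?_
    have := (abs_le.1 (hy k u hu)).1
    exact sub_le_sub_left (hG (by linarith)) _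
  have hneg : ∑ k : Fin N, ∫ u in (k : ℕ) / N..((k : ℕ) + 1) / N, (G u - G (y k)) =
      -∑ k : Fin N, ∫ u in (k : ℕ) / N..((k : ℕ) + 1) / N, (G (y k) - G u) := by
    simp only [← Finset.sum_neg_distrib, ← intervalIntegral.integral_neg, neg_sub]
  have hshift_upper := hG.integral_comp_add_sub_le hD 0 1
  have hshift_lower := hG.integral_sub_comp_sub_le hD 0 1
  rw [zero_sub] at hshift_lower
  have hG0 : D * G (-D) ≤ D * G 0 := mul_le_mul_of_nonneg_left (hG (by linarith)) hD
  have hG1 : D * G 1 ≤ D * G (1 + D) := mul_le_mul_of_nonneg_left (hG (by linarith)) hD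
  rw [herr, abs_le]
  constructor <;> linarith

theorem MonotoneOn.abs_average_sub_integral_le {N : ℕ} (hN : 0 < N) {g : ℝ → ℝ}
    (hg : MonotoneOn g (Icc 0 1)) {y : Fin N → ℝ} (hy01 : ∀ k, y k ∈ Icc (0 : ℝ) 1) {D : ℝ}
    (hy : CellwiseWithin y D) :
    |(1 / N : ℝ) * ∑ k, g (y k) - ∫ u in (0 : ℝ)..1, g u| ≤ D * (g 1 - g 0) := by
  have hD := hy.nonneg hN
  set G := IccExtend zero_le_one ((Icc 0 1).domRestrict g)
  have hG : Monotone G := (monotoneOn_iff_monotone.1 hg).IccExtend _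
  have hGg : EqOn G g (Icc 0 1) := fun u hu => IccExtend_of_mem _ _ hu
  have hG1 : G (1 + D) = g 1 := IccExtend_of_right_le _ _ (by linarith)
  have hG0 : G (-D) = g 0 := IccExtend_of_le_left _ _ (by linarith)
  have h := hG.abs_average_sub_integral_le hN hy
  rwa [hG1, hG0, Finset.sum_congr rfl fun k _ => hGg (hy01 k),
    intervalIntegral.integral_congr (by rwa [uIcc_of_le zero_le_one])] at h

theorem lt_natCard_le_iff_apply_sort_le {α : Type*} [LinearOrder α] {N : ℕ} (x : Fin N → α)
    (k : Fin N) (a : α) : (k : ℕ) < Nat.card {i // x i ≤ a} ↔ x (Tuple.sort x k) ≤ a := by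
  have hcard : Nat.card {i // x i ≤ a} = #{i | (x ∘ Tuple.sort x) i ≤ a} := by
    rw [← Fintype.card_subtype, ← Nat.card_eq_fintype_card]
    exact Nat.card_congr ((Tuple.sort x).subtypeEquiv fun _ => Iff.rfl).symm
  rw [hcard]
  exact Tuple.lt_card_le_iff_apply_le_of_monotone (Tuple.monotone_sort x)

theorem abs_natCard_div_sub_le_iSup {N : ℕ} (x : Fin N → ℝ) {t : ℝ} (ht : t ∈ Icc (0 : ℝ) 1) :
    |(Nat.card {i // x i ≤ t} : ℝ) / N - t| ≤
      ⨆ s : Icc (0 : ℝ) 1, |(Nat.card {i // x i ≤ (s : ℝ)} : ℝ) / N - s| := by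
  refine le_ciSup (f := fun s : Icc (0 : ℝ) 1 => |(Nat.card {i // x i ≤ (s : ℝ)} : ℝ) / N - s|)
    ⟨1, ?_⟩ ⟨t, ht⟩
  rintro _ ⟨s, rfl⟩
  refine abs_sub_le_of_nonneg_of_le (by positivity) (div_le_one_of_le₀ ?_ (Nat.cast_nonneg N))
    s.2.1 s.2.2
  exact_mod_cast (Finite.card_subtype_le _).trans (Nat.card_fin N).le

theorem cellwiseWithin_comp_sort {N : ℕ} {x : Fin N → ℝ} (hx : ∀ i, x i ∈ Icc (0 : ℝ) 1) {D : ℝ}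
    (hD : ∀ t ∈ Icc (0 : ℝ) 1, |(Nat.card {i // x i ≤ t} : ℝ) / N - t| ≤ D) :
    CellwiseWithin (x ∘ Tuple.sort x) D := by
  intro k
  have hy := hx (Tuple.sort x k)
  set y := x (Tuple.sort x k)
  have hD0 : 0 ≤ D := (abs_nonneg _).trans (hD 0 ⟨le_rfl, zero_le_one⟩)
  have hk0 : (0 : ℝ) ≤ (k : ℕ) / N := by positivity
  have hright : ((k : ℕ) + 1) / N - y ≤ D := by
    have hcard : ((k : ℕ) + 1 : ℝ) ≤ Nat.card {i // x i ≤ y} := by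
      exact_mod_cast (lt_natCard_le_iff_apply_sort_le x k y).2 le_rfl
    have hdiv : ((k : ℕ) + 1 : ℝ) / N ≤ Nat.card {i // x i ≤ y} / N := by gcongr
    linarith [(abs_le.1 (hD y hy)).2]
  have hleft : y - (k : ℕ) / N ≤ D := by
    by_contra! h
    set t := (y + ((k : ℕ) / N + D)) / 2 with ht
    have hcard : (Nat.card {i // x i ≤ t} : ℝ) ≤ (k : ℕ) := by
      exact_mod_cast not_lt.1 fun hlt =>
        ((lt_natCard_le_iff_apply_sort_le x k t).1 hlt).not_gt (by linarith)
    have hdiv : (Nat.card {i // x i ≤ t} : ℝ) / N ≤ (k : ℕ) / N := by gcongr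
    linarith [(abs_le.1 (hD t ⟨by linarith [hy.1], by linarith [hy.2]⟩)).1]
  intro u hu
  rw [Function.comp_apply, abs_le]
  constructor <;> linarith [hu.1, hu.2]

/-- **One-dimensional Koksma–Hlawka inequality.** If `f : [0,1] → ℝ` has
bounded total variation `V(f)` on `[0,1]` and `x₁, …, x_N ∈ [0,1]` have star
discrepancy `D*_N = sup_{t ∈ [0,1]} |(1/N)·#{i : xᵢ ≤ t} − t|`, then
`|(1/N) ∑ᵢ f(xᵢ) − ∫₀¹ f| ≤ V(f)·D*_N`. -/
theorem koksma_hlawka_one_dim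
    {N : ℕ} (hN : 0 < N) (f : ℝ → ℝ)
    (hf : BoundedVariationOn f (Set.Icc 0 1))
    (x : Fin N → ℝ) (hx : ∀ i, x i ∈ Set.Icc (0 : ℝ) 1) :
    |(1 / N : ℝ) * ∑ i, f (x i) - ∫ u in (0 : ℝ)..1, f u| ≤
      (eVariationOn f (Set.Icc 0 1)).toReal *
        ⨆ t : Set.Icc (0 : ℝ) 1,
          |(Nat.card {i : Fin N // x i ≤ (t : ℝ)} : ℝ) / N - (t : ℝ)| := by
  set D := ⨆ t : Set.Icc (0 : ℝ) 1, |(Nat.card {i : Fin N // x i ≤ (t : ℝ)} : ℝ) / N - (t : ℝ)|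
  have hcells := cellwiseWithin_comp_sort hx fun t ht => abs_natCard_div_sub_le_iSup x ht
  obtain ⟨p, q, hp, hq, rfl, hpq⟩ := hf.locallyBoundedVariationOn.exists_monotoneOn_sub_monotoneOn'
  have hV : (eVariationOn (p - q) (Icc 0 1)).toReal = (p 1 - p 0) + (q 1 - q 0) := by
    rw [hpq 0 ⟨le_rfl, zero_le_one⟩ 1 ⟨zero_le_one, le_rfl⟩,
      variationOnFromTo.eq_of_le _ _ zero_le_one, inter_self]
  have hint : ∀ {g : ℝ → ℝ}, MonotoneOn g (Icc 0 1) → IntervalIntegrable g volume 0 1 :=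
    fun hg => MonotoneOn.intervalIntegrable (by rwa [uIcc_of_le zero_le_one])
  have hsort : ∑ i, (p - q) (x i) = ∑ k, (p - q) (x (Tuple.sort x k)) :=
    (Equiv.sum_comp (Tuple.sort x) _).symm
  calc |(1 / N : ℝ) * ∑ i, (p - q) (x i) - ∫ u in (0 : ℝ)..1, (p - q) u|
      = |((1 / N : ℝ) * ∑ k, p (x (Tuple.sort x k)) - ∫ u in (0 : ℝ)..1, p u) -
          ((1 / N : ℝ) * ∑ k, q (x (Tuple.sort x k)) - ∫ u in (0 : ℝ)..1, q u)| := by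
        rw [hsort]
        simp only [Pi.sub_apply, Finset.sum_sub_distrib,
          intervalIntegral.integral_sub (hint hp) (hint hq)]
        ring_nf
    _ ≤ D * (p 1 - p 0) + D * (q 1 - q 0) := (abs_sub _ _).trans <| add_le_add
        (hp.abs_average_sub_integral_le hN (fun k => hx _) hcells)
        (hq.abs_average_sub_integral_le hN (fun k => hx _) hcells)
    _ = (eVariationOn (p - q) (Icc 0 1)).toReal * D := by rw [hV]; ring
end
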